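/- arXiv:2602.18002 — 2 statements merged into one kernel-verified Lean document; each statement's English description precedes it below -/
import Mathlib

section
/- Bias of L2 clipping under a bounded α-th moment: let g be a random vector in a normed space with E[‖g‖^α] < ∞, where α ∈ (1,2), and for u > 0 define Clip(u,g) := g if ‖g‖ ≤ u and (u/‖g‖)·g otherwise. Then E[ ‖Clip(u,g) − g‖ ] ≤ u^{1−α} · E[‖g‖^α]. -/
open MeasureTheory

/-- The L2 clipping operator: `Clip(u,g) = g` if `‖g‖ ≤ u` and `(u/‖g‖)·g` otherwise. -/
noncomputable def clipL2 {E : Type*} [NormedAddCommGroup E] [NormedSpace ℝ E]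
    (u : ℝ) (g : E) : E :=
  if ‖g‖ ≤ u then g else (u / ‖g‖) • g

/-! Clipping moves `x` by exactly the excess `(‖x‖ - u)⁺`, and `(t - u)⁺ ≤ t = t^(1-α) t^α ≤ u^(1-α) t^α`
on `t > u`; integrating this pointwise bound gives the claim. -/

lemma norm_clipL2_sub {E : Type*} [NormedAddCommGroup E] [NormedSpace ℝ E]
    {u : ℝ} (hu : 0 ≤ u) (x : E) : ‖clipL2 u x - x‖ = max (‖x‖ - u) 0 := by
  unfold clipL2
  split_ifs with h
  · simp [h]
  · rw [not_le] at h
    have hx : 0 < ‖x‖ := hu.trans_lt h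
    have hsub : (u / ‖x‖) • x - x = (u / ‖x‖ - 1) • x := by rw [sub_smul, one_smul]
    rw [hsub, norm_smul, Real.norm_eq_abs, abs_of_nonpos, max_eq_left (by linarith)]
    · field_simp
      ring
    · rw [sub_nonpos, div_le_one hx]
      exact h.le

lemma max_sub_zero_le_rpow_mul {t u α : ℝ} (ht : 0 ≤ t) (hu : 0 < u) (hα : 1 ≤ α) :
    max (t - u) 0 ≤ u ^ (1 - α) * t ^ α := by
  rcases le_or_gt t u with htu | hut
  · rw [max_eq_right (by linarith)]
    positivity
  · have htpos : 0 < t := hu.trans hut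
    calc max (t - u) 0 ≤ t := max_le (by linarith) ht
      _ = t ^ (1 - α) * t ^ α := by rw [← Real.rpow_add htpos]; simp
      _ ≤ u ^ (1 - α) * t ^ α :=
        mul_le_mul_of_nonneg_right (Real.rpow_le_rpow_of_nonpos hu hut.le (by linarith))
          (Real.rpow_nonneg ht α)

lemma norm_clipL2_sub_le {E : Type*} [NormedAddCommGroup E] [NormedSpace ℝ E]
    {u α : ℝ} (hu : 0 < u) (hα : 1 ≤ α) (x : E) :
    ‖clipL2 u x - x‖ ≤ u ^ (1 - α) * ‖x‖ ^ α := by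
  rw [norm_clipL2_sub hu.le]
  exact max_sub_zero_le_rpow_mul (norm_nonneg x) hu hα

theorem clip_bias_of_alpha_moment_general
    {Ω : Type*} [MeasurableSpace Ω] {E : Type*} [NormedAddCommGroup E] [NormedSpace ℝ E]
    (μ : Measure Ω)
    (g : Ω → E)
    (α : ℝ) (hα1 : 1 < α)
    (hint : Integrable (fun ω => ‖g ω‖ ^ α) μ)
    (u : ℝ) (hu : 0 < u) :
    ∫ ω, ‖clipL2 u (g ω) - g ω‖ ∂μ ≤ u ^ (1 - α) * ∫ ω, ‖g ω‖ ^ α ∂μ := by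
  rw [← integral_const_mul]
  exact integral_mono_of_nonneg (.of_forall fun _ => norm_nonneg _) (hint.const_mul _)
    (.of_forall fun ω => norm_clipL2_sub_le hu hα1.le (g ω))

/-- **Bias of L2 clipping under a bounded `α`-th moment.**
If `g` is a random vector in a normed space with `E[‖g‖^α] < ∞`, where `α ∈ (1,2)`,
then for every `u > 0`, `E[‖Clip(u,g) − g‖] ≤ u^(1−α) · E[‖g‖^α]`. -/
theorem clip_bias_of_alpha_moment
    {Ω : Type*} [MeasurableSpace Ω] {E : Type*} [NormedAddCommGroup E] [NormedSpace ℝ E]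
    (μ : Measure Ω) [IsProbabilityMeasure μ]
    (g : Ω → E) (hg : StronglyMeasurable g)
    (α : ℝ) (hα1 : 1 < α) (hα2 : α < 2)
    (hint : Integrable (fun ω => ‖g ω‖ ^ α) μ)
    (u : ℝ) (hu : 0 < u) :
    ∫ ω, ‖clipL2 u (g ω) - g ω‖ ∂μ ≤ u ^ (1 - α) * ∫ ω, ‖g ω‖ ^ α ∂μ :=
  clip_bias_of_alpha_moment_general μ g α hα1 hint u hu
end

section
/- Second-moment bias of scalar clipping: let X be a real random variable with E[|X|^{2α}] ≤ B^{2α}, where α ∈ (1,2) and B > 0, and for u > 0 define clip(u, x) := max(−u, min(x, u)). Then | E[ clip(u, X)² − X² ] | ≤ B^{2α} · u^{2−2α}. -/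
/-! Clipping at level `u` only changes `X` where `|X| > u`, and there `0 ≤ X² - clip(u, X)² ≤ X²`.
For `|x| > u` and `p ≥ 2` one has `x² = |x|^p |x|^(2-p) ≤ |x|^p u^(2-p)`, so the pointwise error is
dominated by `|X|^p u^(2-p)`; integrating against the moment bound gives the claim. -/

open MeasureTheory

theorem abs_max_neg_min {x u : ℝ} (hu : 0 ≤ u) : |max (-u) (min x u)| = min |x| u := by
  simp only [abs_eq_max_neg]
  grind

theorem sq_sub_sq_min_le_rpow {t u p : ℝ} (ht : 0 ≤ t) (hu : 0 < u) (hp : 2 ≤ p) :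
    t ^ 2 - min t u ^ 2 ≤ t ^ p * u ^ (2 - p) := by
  rcases le_total t u with htu | hut
  · rw [min_eq_left htu, sub_self]
    positivity
  · have hpos : 0 < t := hu.trans_le hut
    calc t ^ 2 - min t u ^ 2 ≤ t ^ 2 := sub_le_self _ (sq_nonneg _)
      _ = t ^ p * t ^ (2 - p) := by
        rw [← Real.rpow_add hpos, add_sub_cancel, Real.rpow_two]
      _ ≤ t ^ p * u ^ (2 - p) := by
        have hdecr : t ^ (2 - p) ≤ u ^ (2 - p) := Real.rpow_le_rpow_of_nonpos hu hut (by linarith)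
        gcongr

theorem abs_sq_clip_sub_sq_le {x u p : ℝ} (hu : 0 < u) (hp : 2 ≤ p) :
    |max (-u) (min x u) ^ 2 - x ^ 2| ≤ |x| ^ p * u ^ (2 - p) := by
  rw [← sq_abs (max _ _), abs_max_neg_min hu.le, ← sq_abs x, abs_sub_comm,
    abs_of_nonneg (sub_nonneg.2 (pow_le_pow_left₀ (le_min (abs_nonneg x) hu.le)
      (min_le_left _ _) 2))]
  exact sq_sub_sq_min_le_rpow (abs_nonneg x) hu hp

theorem scalar_clip_second_moment_bias_general
    {Ω : Type*} [MeasurableSpace Ω] (μ : Measure Ω)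
    (X : Ω → ℝ)
    (α B : ℝ) (hα1 : 1 < α)
    (hint : Integrable (fun ω => |X ω| ^ (2 * α)) μ)
    (hmom : ∫ ω, |X ω| ^ (2 * α) ∂μ ≤ B ^ (2 * α))
    (u : ℝ) (hu : 0 < u) :
    |∫ ω, ((max (-u) (min (X ω) u)) ^ 2 - (X ω) ^ 2) ∂μ| ≤ B ^ (2 * α) * u ^ (2 - 2 * α) := by
  have hp : 2 ≤ 2 * α := by linarith
  rw [← Real.norm_eq_abs]
  calc ‖∫ ω, ((max (-u) (min (X ω) u)) ^ 2 - (X ω) ^ 2) ∂μ‖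
      ≤ ∫ ω, |X ω| ^ (2 * α) * u ^ (2 - 2 * α) ∂μ :=
        norm_integral_le_of_norm_le (hint.mul_const _)
          (ae_of_all _ fun _ => abs_sq_clip_sub_sq_le hu hp)
    _ = (∫ ω, |X ω| ^ (2 * α) ∂μ) * u ^ (2 - 2 * α) := integral_mul_const _ _
    _ ≤ B ^ (2 * α) * u ^ (2 - 2 * α) := by
      gcongr

/-- **Second-moment bias of scalar clipping.**
If `X` is a real random variable with `E[|X|^{2α}] ≤ B^{2α}`, where `α ∈ (1,2)` and `B > 0`,
and `clip(u,x) := max(−u, min(x,u))` for `u > 0`, then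
`|E[clip(u,X)² − X²]| ≤ B^{2α} · u^{2−2α}`. -/
theorem scalar_clip_second_moment_bias
    {Ω : Type*} [MeasurableSpace Ω] (μ : Measure Ω) [IsProbabilityMeasure μ]
    (X : Ω → ℝ) (hX : Measurable X)
    (α B : ℝ) (hα1 : 1 < α) (hα2 : α < 2) (hB : 0 < B)
    (hint : Integrable (fun ω => |X ω| ^ (2 * α)) μ)
    (hmom : ∫ ω, |X ω| ^ (2 * α) ∂μ ≤ B ^ (2 * α))
    (u : ℝ) (hu : 0 < u) :
    |∫ ω, ((max (-u) (min (X ω) u)) ^ 2 - (X ω) ^ 2) ∂μ| ≤ B ^ (2 * α) * u ^ (2 - 2 * α) :=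
  scalar_clip_second_moment_bias_general μ X α B hα1 hint hmom u hu
end
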